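/- arXiv:1002.1500 — 2 statements merged into one kernel-verified Lean document; each statement's English description precedes it below -/
import Mathlib

section
/- Define a partition pair of size n and type r to be a pair (λ, μ) where λ is a partition of n and μ is a sub-partition of λ (a multiset of parts of λ) of length at most r, up to permuting equal parts. Define Q_{n,r} to be the set of pairs (ν, μ) where μ is a partition with |μ| ≤ n and all parts of μ at most r, and ν is a partition of n − |μ|. Then the map (ν, μ) ↦ (ν ∪ μ^t, μ^t), where μ^t is the conjugate partition and ∪ denotes union of multisets of parts, is a bijection from Q_{n,r} to the set P_{n,r} of partition pairs of size n and type r. -/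
/-!
The conjugate of a partition is the transpose of its Young diagram, so it is an involution on
partitions; it preserves the size, and it turns a partition with all parts at most `r` into one
with at most `r` parts (the number of parts of `μ^t` is the largest part of `μ`). Hence
`(λ, μ) ↦ (λ - μ, μ^t)` is a two-sided inverse of `(ν, μ) ↦ (ν + μ^t, μ^t)`.
-/

/-- The conjugate (transpose) of a partition, given as a multiset of positive
parts: the `j`-th column of the Young diagram has height `#{p ∈ μ : p > j}`. -/
def conjP (μ : Multiset ℕ) : Multiset ℕ :=
  ((Multiset.range μ.sum).map fun j => Multiset.card (μ.filter fun p => j < p)).filter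
    fun x => 0 < x

/-- `Q_{n,r}`: pairs `(ν, μ)` where `μ` is a partition with `|μ| ≤ n` and all
parts at most `r`, and `ν` is a partition of `n − |μ|`.  Partitions are
multisets of positive integers. -/
def Qpairs (n r : ℕ) : Set (Multiset ℕ × Multiset ℕ) :=
  {p | (∀ x ∈ p.1, 0 < x) ∧ (∀ x ∈ p.2, 0 < x ∧ x ≤ r) ∧
    p.2.sum ≤ n ∧ p.1.sum = n - p.2.sum}

/-- `P_{n,r}`: partition pairs of size `n` and type `r`: `λ` a partition of `n`
and `μ ≤ λ` a sub-multiset of its parts with at most `r` elements (using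
multisets identifies sub-partitions differing by permuting equal parts). -/
def Ppairs (n r : ℕ) : Set (Multiset ℕ × Multiset ℕ) :=
  {p | (∀ x ∈ p.1, 0 < x) ∧ p.1.sum = n ∧ p.2 ≤ p.1 ∧ Multiset.card p.2 ≤ r}

namespace Multiset

theorem range_filter_lt (s m : ℕ) : (range s).filter (· < m) = range (min m s) := by
  rw [Nodup.ext ((nodup_range s).filter _) (nodup_range _)]
  intro a
  simp only [mem_filter, mem_range]
  omega

theorem sum_filter_pos (s : Multiset ℕ) : (s.filter (0 < ·)).sum = s.sum := by
  have hzero : (s.filter fun x => ¬0 < x).sum = 0 :=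
    sum_eq_zero fun x hx => Nat.eq_zero_of_not_pos (mem_filter.1 hx).2
  rw [← sum_filter_add_sum_filter_not (s := s) (0 < ·), hzero, add_zero]

theorem sum_range_card_filter_lt (μ : Multiset ℕ) {s : ℕ} (hs : ∀ p ∈ μ, p ≤ s) :
    ((range s).map fun j => card (μ.filter (j < ·))).sum = μ.sum := by
  induction μ using Multiset.induction with
  | empty => simp
  | cons a t ih =>
    have hcard (j : ℕ) : card ((a ::ₘ t).filter (j < ·)) =
        (if j < a then 1 else 0) + card (t.filter (j < ·)) := by
      rw [filter_cons, card_add]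
      split_ifs <;> rfl
    have hrow : ((range s).map fun j => if j < a then 1 else 0).sum = a := by
      change ∑ j ∈ Finset.range s, (if j < a then 1 else 0) = a
      rw [Finset.sum_boole]
      change card ((range s).filter (· < a)) = a
      rw [range_filter_lt, card_range, min_eq_left (hs a (mem_cons_self a t))]
    simp only [hcard, sum_map_add, hrow, ih fun p hp => hs p (mem_cons_of_mem hp), sum_cons]

end Multiset

theorem sum_conjP (μ : Multiset ℕ) : (conjP μ).sum = μ.sum := by
  rw [conjP, Multiset.sum_filter_pos]
  exact μ.sum_range_card_filter_lt fun p hp => Multiset.le_sum_of_mem hp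

theorem pos_of_mem_conjP {μ : Multiset ℕ} {x : ℕ} (hx : x ∈ conjP μ) : 0 < x :=
  (Multiset.mem_filter.1 hx).2

theorem le_card_of_mem_conjP {μ : Multiset ℕ} {x : ℕ} (hx : x ∈ conjP μ) :
    x ≤ Multiset.card μ := by
  obtain ⟨j, -, rfl⟩ := Multiset.mem_map.1 (Multiset.mem_filter.1 hx).1
  exact Multiset.card_le_card (Multiset.filter_le _ _)

theorem card_conjP_le {μ : Multiset ℕ} {r : ℕ} (hμ : ∀ p ∈ μ, p ≤ r) :
    Multiset.card (conjP μ) ≤ r := by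
  have hcol (j : ℕ) (hj : 0 < Multiset.card (μ.filter (j < ·))) : j < r := by
    obtain ⟨p, hp⟩ := Multiset.card_pos_iff_exists_mem.1 hj
    rw [Multiset.mem_filter] at hp
    exact hp.2.trans_le (hμ p hp.1)
  calc Multiset.card (conjP μ) ≤ Multiset.card ((Multiset.range μ.sum).filter (· < r)) := by
        rw [conjP, Multiset.filter_map, Multiset.card_map]
        exact Multiset.card_le_card (Multiset.monotone_filter_right _ hcol)
    _ ≤ r := by
        rw [Multiset.range_filter_lt, Multiset.card_range]
        exact min_le_left _ _

namespace YoungDiagram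

theorem coe_rowLens (T : YoungDiagram) :
    (T.rowLens : Multiset ℕ) = (Multiset.range (T.colLen 0)).map T.rowLen := by
  rw [rowLens, ← Multiset.map_coe, Multiset.coe_range]

theorem card_filter_lt_rowLens (T : YoungDiagram) (j : ℕ) :
    Multiset.card ((T.rowLens : Multiset ℕ).filter (j < ·)) = T.colLen j := by
  have hcol (i : ℕ) : j < T.rowLen i ↔ i < T.colLen j := by
    rw [← mem_iff_lt_rowLen, mem_iff_lt_colLen]
  rw [coe_rowLens, Multiset.filter_map, Multiset.card_map]
  simp only [Function.comp_def, hcol]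
  rw [Multiset.range_filter_lt, Multiset.card_range, min_eq_left (T.colLen_anti 0 j j.zero_le)]

theorem rowLen_zero_le_sum_rowLens (T : YoungDiagram) :
    T.rowLen 0 ≤ (T.rowLens : Multiset ℕ).sum := by
  rcases Nat.eq_zero_or_pos (T.rowLen 0) with h0 | h0
  · omega
  · rw [Multiset.sum_coe]
    exact List.le_sum_of_mem (List.mem_map_of_mem
      (List.mem_range.2 (mem_iff_lt_colLen.1 (mem_iff_lt_rowLen.2 h0))))

theorem conjP_rowLens (T : YoungDiagram) : conjP T.rowLens = T.transpose.rowLens := by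
  have hrow (j : ℕ) : 0 < T.colLen j ↔ j < T.rowLen 0 := by
    rw [← mem_iff_lt_colLen, mem_iff_lt_rowLen]
  rw [coe_rowLens T.transpose, colLen_transpose, conjP, Multiset.filter_map]
  simp only [rowLen_transpose, card_filter_lt_rowLens, Function.comp_def, hrow]
  rw [Multiset.range_filter_lt, min_eq_left T.rowLen_zero_le_sum_rowLens]

theorem exists_rowLens_eq {μ : Multiset ℕ} (hμ : ∀ x ∈ μ, 0 < x) :
    ∃ T : YoungDiagram, (T.rowLens : Multiset ℕ) = μ := by
  refine ⟨ofRowLens (μ.sort (· ≥ ·)) (Multiset.pairwise_sort μ (· ≥ ·)).sortedGE, ?_⟩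
  rw [rowLens_ofRowLens_eq_self fun x hx => hμ x ((Multiset.mem_sort _).1 hx), Multiset.sort_eq]

end YoungDiagram

theorem conjP_conjP {μ : Multiset ℕ} (hμ : ∀ x ∈ μ, 0 < x) : conjP (conjP μ) = μ := by
  obtain ⟨T, rfl⟩ := YoungDiagram.exists_rowLens_eq hμ
  rw [YoungDiagram.conjP_rowLens, YoungDiagram.conjP_rowLens, YoungDiagram.transpose_transpose]

theorem mapsTo_Qpairs_Ppairs (n r : ℕ) :
    Set.MapsTo (fun p : Multiset ℕ × Multiset ℕ => (p.1 + conjP p.2, conjP p.2))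
      (Qpairs n r) (Ppairs n r) := by
  rintro ⟨ν, μ⟩ ⟨hν, hμ, hμn, hνn⟩
  refine ⟨fun x hx => ?_, ?_, Multiset.le_add_left _ _, card_conjP_le fun p hp => (hμ p hp).2⟩
  · rcases Multiset.mem_add.1 hx with hx | hx
    exacts [hν x hx, pos_of_mem_conjP hx]
  · change (ν + conjP μ).sum = n
    rw [Multiset.sum_add, sum_conjP, hνn, Nat.sub_add_cancel hμn]

theorem mapsTo_Ppairs_Qpairs (n r : ℕ) :
    Set.MapsTo (fun p : Multiset ℕ × Multiset ℕ => (p.1 - p.2, conjP p.2))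
      (Ppairs n r) (Qpairs n r) := by
  rintro ⟨l, μ⟩ ⟨hl, hln, hμl, hμr⟩
  have hsum : (l - μ).sum + μ.sum = n := by
    rw [← Multiset.sum_add, tsub_add_cancel_of_le hμl, hln]
  refine ⟨fun x hx => hl x (Multiset.mem_of_le (Multiset.sub_le_self _ _) hx),
    fun x hx => ⟨pos_of_mem_conjP hx, (le_card_of_mem_conjP hx).trans hμr⟩, ?_, ?_⟩
  · change (conjP μ).sum ≤ n
    rw [sum_conjP]
    omega
  · change (l - μ).sum = n - (conjP μ).sum
    rw [sum_conjP]
    omega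

theorem invOn_Qpairs_Ppairs (n r : ℕ) :
    Set.InvOn (fun p : Multiset ℕ × Multiset ℕ => (p.1 - p.2, conjP p.2))
      (fun p : Multiset ℕ × Multiset ℕ => (p.1 + conjP p.2, conjP p.2)) (Qpairs n r) (Ppairs n r) := by
  constructor
  · rintro ⟨ν, μ⟩ ⟨-, hμ, -⟩
    simp only [add_tsub_cancel_right, conjP_conjP fun x hx => (hμ x hx).1]
  · rintro ⟨l, μ⟩ ⟨hl, -, hμl, -⟩
    simp only [conjP_conjP fun x hx => hl x (Multiset.mem_of_le hμl hx), tsub_add_cancel_of_le hμl]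

/-- the map `(ν, μ) ↦ (ν ∪ μ^t, μ^t)` is a bijection from
`Q_{n,r}` to `P_{n,r}`. -/
theorem stmt_5 (n r : ℕ) :
    Set.BijOn (fun p : Multiset ℕ × Multiset ℕ => (p.1 + conjP p.2, conjP p.2))
      (Qpairs n r) (Ppairs n r) :=
  (invOn_Qpairs_Ppairs n r).bijOn (mapsTo_Qpairs_Ppairs n r) (mapsTo_Ppairs_Qpairs n r)
end

section
/- The number of monomials of graded degree n in variables u_1, ..., u_n, v_1, ..., v_r, where u_i has degree i and v_j has degree j, equals the number of partition pairs (λ, μ) of size n and type r (λ a partition of n, μ a sub-multiset of the parts of λ with at most r elements). -/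
open Finset

section SuffixSum

variable {M : Type*} [AddCommMonoid M] {r : ℕ}

def suffixSum (m : Fin r → M) (j : Fin r) : M := ∑ k ∈ Ici j, m k

theorem suffixSum_eq_add (m : Fin r → M) (j : Fin r) :
    suffixSum m j = m j + if h : (j : ℕ) + 1 < r then suffixSum m ⟨j + 1, h⟩ else 0 := by
  rw [suffixSum, Ici_eq_cons_Ioi, sum_cons]
  split_ifs with h
  · congr 2
    ext k
    simp only [mem_Ioi, mem_Ici, Fin.lt_def, Fin.le_iff_val_le_val]
    omega
  · refine congrArg _ (sum_eq_zero fun k hk => ?_)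
    have := k.isLt
    rw [mem_Ioi, Fin.lt_def] at hk
    omega

theorem sum_suffixSum (m : Fin r → M) :
    ∑ j, suffixSum m j = ∑ k : Fin r, ((k : ℕ) + 1) • m k := by
  simp only [suffixSum]
  rw [sum_comm' (t' := univ) (s' := fun k => Iic k) (by simp)]
  simp [Fin.card_Iic]

theorem antitone_suffixSum [PartialOrder M] [CanonicallyOrderedAdd M] (m : Fin r → M) :
    Antitone (suffixSum m) :=
  fun _ _ hij => sum_le_sum_of_subset (Ici_subset_Ici.mpr hij)

def succDiff [Sub M] (a : Fin r → M) (j : Fin r) : M :=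
  a j - if h : (j : ℕ) + 1 < r then a ⟨j + 1, h⟩ else 0

theorem succDiff_suffixSum [PartialOrder M] [Sub M] [OrderedSub M] [AddLeftReflectLE M]
    (m : Fin r → M) : succDiff (suffixSum m) = m := by
  funext j
  rw [succDiff, suffixSum_eq_add, add_tsub_cancel_right]

variable [PartialOrder M] [CanonicallyOrderedAdd M] [Sub M] [OrderedSub M]

theorem suffixSum_succDiff {a : Fin r → M} (ha : Antitone a) (j : Fin r) :
    suffixSum (succDiff a) j = a j := by
  rw [suffixSum_eq_add, succDiff]
  split_ifs with h
  · rw [suffixSum_succDiff ha ⟨j + 1, h⟩]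
    exact tsub_add_cancel_of_le (ha (Fin.le_def.2 (Nat.le_succ _)))
  · rw [tsub_zero, add_zero]
termination_by r - j

def suffixSumEquiv [AddLeftReflectLE M] : (Fin r → M) ≃ {a : Fin r → M // Antitone a} where
  toFun m := ⟨suffixSum m, antitone_suffixSum m⟩
  invFun a := succDiff a
  left_inv := succDiff_suffixSum
  right_inv a := Subtype.ext (funext (suffixSum_succDiff a.2))

end SuffixSum

theorem Multiset.filter_pos_add_replicate_zero (s : Multiset ℕ) :
    s.filter (0 < ·) + replicate (card s - card (s.filter (0 < ·))) 0 = s := by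
  conv_rhs => rw [← filter_add_not (0 < ·) s]
  congr 1
  refine (eq_replicate.2 ⟨?_, fun b hb => by simpa using (mem_filter.1 hb).2⟩).symm
  have := congrArg card (filter_add_not (0 < ·) s)
  rw [card_add] at this
  omega

def lengthLE (r : ℕ) : Set (Multiset ℕ) :=
  {μ | (∀ x ∈ μ, 0 < x) ∧ Multiset.card μ ≤ r}

section AntitoneVectors

variable {r : ℕ}

def posParts (a : Fin r → ℕ) : Multiset ℕ := (List.ofFn a : Multiset ℕ).filter (0 < ·)

theorem card_posParts_le (a : Fin r → ℕ) : Multiset.card (posParts a) ≤ r :=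
  (Multiset.card_le_card (Multiset.filter_le _ _)).trans (by simp)

theorem sum_posParts (a : Fin r → ℕ) : (posParts a).sum = ∑ j, a j := by
  have h := congrArg Multiset.sum
    (Multiset.filter_pos_add_replicate_zero (List.ofFn a : Multiset ℕ))
  rw [Multiset.sum_add, Multiset.sum_replicate, smul_zero, add_zero] at h
  rw [posParts, h, Multiset.sum_coe, List.sum_ofFn]

def decreasingParts (r : ℕ) (μ : Multiset ℕ) (j : Fin r) : ℕ :=
  (μ.sort (· ≥ ·)).getD j 0

theorem antitone_decreasingParts (μ : Multiset ℕ) : Antitone (decreasingParts r μ) := by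
  intro i j hij
  simp only [decreasingParts]
  by_cases hj : (j : ℕ) < (μ.sort (· ≥ ·)).length
  · have hi : (i : ℕ) < (μ.sort (· ≥ ·)).length := lt_of_le_of_lt hij hj
    rw [List.getD_eq_getElem _ _ hj, List.getD_eq_getElem _ _ hi]
    exact (Multiset.pairwise_sort μ (· ≥ ·)).rel_get_of_le
      (a := ⟨i, hi⟩) (b := ⟨j, hj⟩) hij
  · rw [List.getD_eq_default _ _ (not_lt.mp hj)]
    exact Nat.zero_le _

theorem ofFn_decreasingParts {μ : Multiset ℕ} (hμ : Multiset.card μ ≤ r) :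
    List.ofFn (decreasingParts r μ) =
      μ.sort (· ≥ ·) ++ List.replicate (r - Multiset.card μ) 0 := by
  refine List.ext_getElem (by simp only [List.length_ofFn, List.length_append,
    Multiset.length_sort, List.length_replicate]; omega) fun i _ _ => ?_
  simp only [List.getElem_ofFn, decreasingParts, List.getElem_append]
  split_ifs with h
  · exact List.getD_eq_getElem _ _ h
  · rw [List.getD_eq_default _ _ (not_lt.mp h), List.getElem_replicate]

theorem posParts_decreasingParts {μ : Multiset ℕ} (hμ : μ ∈ lengthLE r) :
    posParts (decreasingParts r μ) = μ := by
  rw [posParts, ofFn_decreasingParts hμ.2, ← Multiset.coe_add, Multiset.sort_eq,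
    Multiset.filter_add, Multiset.filter_eq_self.2 hμ.1,
    Multiset.filter_eq_nil.2 fun b hb => by simp [Multiset.eq_of_mem_replicate hb], add_zero]

theorem decreasingParts_posParts {a : Fin r → ℕ} (ha : Antitone a) :
    decreasingParts r (posParts a) = a := by
  refine List.ofFn_injective ((List.Perm.eq_of_pairwise' (r := (· ≥ ·)) ?_ ?_ ?_))
  · exact List.pairwise_ofFn.2 fun i j hij => antitone_decreasingParts _ hij.le
  · exact List.pairwise_ofFn.2 fun i j hij => ha hij.le
  · rw [← Multiset.coe_eq_coe, ofFn_decreasingParts (card_posParts_le a), ← Multiset.coe_add,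
      Multiset.sort_eq]
    have := Multiset.filter_pos_add_replicate_zero (List.ofFn a : Multiset ℕ)
    rwa [Multiset.coe_card, List.length_ofFn] at this

def antitoneEquiv (r : ℕ) : {a : Fin r → ℕ // Antitone a} ≃ lengthLE r where
  toFun a := ⟨posParts a.1, fun _ hx => (Multiset.mem_filter.1 hx).2, card_posParts_le a.1⟩
  invFun μ := ⟨decreasingParts r μ.1, antitone_decreasingParts μ.1⟩
  left_inv a := Subtype.ext (decreasingParts_posParts a.2)
  right_inv μ := Subtype.ext (posParts_decreasingParts μ.2)

end AntitoneVectors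

def partsLE (n : ℕ) : Set (Multiset ℕ) := {ν | ∀ x ∈ ν, 0 < x ∧ x ≤ n}

section Multiplicities

variable {n : ℕ}

def ofMultiplicities (l : Fin n → ℕ) : Multiset ℕ := ∑ i, l i • {(i : ℕ) + 1}

theorem count_ofMultiplicities (l : Fin n → ℕ) (v : ℕ) :
    (ofMultiplicities l).count v = ∑ i : Fin n, if v = (i : ℕ) + 1 then l i else 0 := by
  simp [ofMultiplicities, Multiset.count_sum', Multiset.count_singleton]

theorem count_succ_ofMultiplicities (l : Fin n → ℕ) (i : Fin n) :
    (ofMultiplicities l).count ((i : ℕ) + 1) = l i := by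
  rw [count_ofMultiplicities,
    sum_eq_single i (fun j _ hj => if_neg fun h => hj (Fin.ext (by omega))) (by simp), if_pos rfl]

theorem ofMultiplicities_mem_partsLE (l : Fin n → ℕ) : ofMultiplicities l ∈ partsLE n := by
  intro x hx
  obtain ⟨i, -, hi⟩ := Multiset.mem_sum.1 hx
  rw [Multiset.mem_singleton.1 (Multiset.mem_of_mem_nsmul hi)]
  exact ⟨i.succ_pos, i.isLt⟩

theorem sum_ofMultiplicities (l : Fin n → ℕ) :
    (ofMultiplicities l).sum = ∑ i : Fin n, ((i : ℕ) + 1) * l i := by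
  simp [ofMultiplicities, Multiset.sum_sum, Multiset.sum_nsmul, mul_comm]

theorem ofMultiplicities_count {ν : Multiset ℕ} (hν : ν ∈ partsLE n) :
    ofMultiplicities (fun i : Fin n => ν.count ((i : ℕ) + 1)) = ν := by
  ext v
  rw [count_ofMultiplicities]
  by_cases hv : 0 < v ∧ v ≤ n
  · have hv' : v - 1 + 1 = v := Nat.sub_add_cancel hv.1
    rw [sum_eq_single ⟨v - 1, by omega⟩ (fun j _ hj => if_neg fun h => hj (Fin.ext (by
      change (j : ℕ) = v - 1; omega))) (by simp), if_pos hv'.symm, hv']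
  · rw [sum_eq_zero fun i _ => if_neg fun h => hv (by omega), eq_comm, Multiset.count_eq_zero]
    exact fun hmem => hv (hν v hmem)

end Multiplicities

def multiplicitiesEquiv (n : ℕ) : (Fin n → ℕ) ≃ partsLE n where
  toFun l := ⟨ofMultiplicities l, ofMultiplicities_mem_partsLE l⟩
  invFun ν i := ν.1.count ((i : ℕ) + 1)
  left_inv l := funext (count_succ_ofMultiplicities l)
  right_inv ν := Subtype.ext (ofMultiplicities_count ν.2)

def conjugateEquiv (r : ℕ) : (Fin r → ℕ) ≃ lengthLE r :=
  suffixSumEquiv.trans (antitoneEquiv r)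

theorem sum_conjugateEquiv {r : ℕ} (m : Fin r → ℕ) :
    (conjugateEquiv r m).1.sum = ∑ k : Fin r, ((k : ℕ) + 1) * m k := by
  change (posParts (suffixSum m)).sum = _
  simp only [sum_posParts, sum_suffixSum, smul_eq_mul]

theorem sub_mem_partsLE_of_mem_ppairs {n r : ℕ} {p : Multiset ℕ × Multiset ℕ}
    (hp : p ∈ Ppairs n r) : p.1 - p.2 ∈ partsLE n := by
  obtain ⟨hpos, hsum, -, -⟩ := hp
  intro x hx
  have hx : x ∈ p.1 := Multiset.mem_of_le tsub_le_self hx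
  exact ⟨hpos x hx, hsum ▸ Multiset.le_sum_of_mem hx⟩

theorem snd_mem_lengthLE_of_mem_ppairs {n r : ℕ} {p : Multiset ℕ × Multiset ℕ}
    (hp : p ∈ Ppairs n r) : p.2 ∈ lengthLE r :=
  ⟨fun x hx => hp.1 x (Multiset.mem_of_le hp.2.2.1 hx), hp.2.2.2⟩

theorem add_mem_ppairs {n r : ℕ} {ν μ : Multiset ℕ} (hν : ν ∈ partsLE n)
    (hμ : μ ∈ lengthLE r) (hsum : ν.sum + μ.sum = n) : (ν + μ, μ) ∈ Ppairs n r :=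
  ⟨fun x hx => (Multiset.mem_add.1 hx).elim (fun h => (hν x h).1) (hμ.1 x),
    by rw [Multiset.sum_add, hsum], Multiset.le_add_left _ _, hμ.2⟩

def ppairsEquiv (n r : ℕ) :
    Ppairs n r ≃ {p : partsLE n × lengthLE r // p.1.1.sum + p.2.1.sum = n} where
  toFun p :=
    ⟨(⟨_, sub_mem_partsLE_of_mem_ppairs p.2⟩, ⟨_, snd_mem_lengthLE_of_mem_ppairs p.2⟩),
      by rw [← Multiset.sum_add, tsub_add_cancel_of_le p.2.2.2.1, p.2.2.1]⟩
  invFun q := ⟨_, add_mem_ppairs q.1.1.2 q.1.2.2 q.2⟩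
  left_inv p := Subtype.ext (Prod.ext (tsub_add_cancel_of_le p.2.2.2.1) rfl)
  right_inv q := Subtype.ext (Prod.ext (Subtype.ext (add_tsub_cancel_right _ _)) rfl)

def monomialsEquiv (n r : ℕ) :
    {lm : (Fin n → ℕ) × (Fin r → ℕ) //
      (∑ i : Fin n, ((i : ℕ) + 1) * lm.1 i) + (∑ j : Fin r, ((j : ℕ) + 1) * lm.2 j) = n} ≃
    {p : partsLE n × lengthLE r // p.1.1.sum + p.2.1.sum = n} :=
  ((multiplicitiesEquiv n).prodCongr (conjugateEquiv r)).subtypeEquiv fun lm => by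
    simp only [Equiv.prodCongr_apply, Prod.map, multiplicitiesEquiv, Equiv.coe_fn_mk,
      sum_ofMultiplicities, sum_conjugateEquiv]

/-- the number of monomials `∏ u_i^{l_i} ∏ v_j^{m_j}` of graded
degree `n` in variables `u_1, …, u_n, v_1, …, v_r` (with `deg u_i = i`,
`deg v_j = j`) equals the number of partition pairs of size `n` and type `r`.
Monomials are recorded by their exponent vectors `(l, m)`. -/
theorem stmt_6 (n r : ℕ) :
    Set.ncard {lm : (Fin n → ℕ) × (Fin r → ℕ) |
      (∑ i : Fin n, ((i : ℕ) + 1) * lm.1 i) + (∑ j : Fin r, ((j : ℕ) + 1) * lm.2 j) = n} =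
    Set.ncard (Ppairs n r) := by
  rw [← Nat.card_coe_set_eq, ← Nat.card_coe_set_eq]
  exact Nat.card_congr ((monomialsEquiv n r).trans (ppairsEquiv n r).symm)
end
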